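/- (Frostman's lemma for neutralized weighted pressure) Let Z ⊆ X be nonempty compact, s ∈ ℝ, N ∈ ℕ, ε > 0, and suppose c := W^s_{N,ε}(Z,Φ) > 0. Then there exists a Borel probability measure μ on X with μ(Z) = 1 such that for every x ∈ X and n ≥ N, μ(B_n(x, e^{−nε})) ≤ (1/c) · exp[−ns + sup_{y∈B_n(x,e^{−nε})} φ_n(y)]. -/

import Mathlib

open Filter Set MeasureTheory Metric Topology ENNReal

variable {X : Type*} [MetricSpace X]

/-- The Bowen ball of order `n` and radius `r` around `x`. -/
def bowenBall (T : X → X) (n : ℕ) (x : X) (r : ℝ) : Set X :=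
  {y | ∀ j < n, dist (T^[j] x) (T^[j] y) < r}

/-- The neutralized Bowen ball `B_n(x, e^{-nε})`. -/
noncomputable def nBall (T : X → X) (n : ℕ) (ε : ℝ) (x : X) : Set X :=
  bowenBall T n x (Real.exp (-(n * ε)))

/-- The weight `exp[-n s + sup_{B_n(x,e^{-nε})} φ_n]` of a neutralized Bowen ball. -/
noncomputable def wSup (T : X → X) (φ : ℕ → X → ℝ) (s ε : ℝ) (n : ℕ) (x : X) : ℝ≥0∞ :=
  ENNReal.ofReal (Real.exp (-(n : ℝ) * s + sSup ((φ n) '' nBall T n ε x)))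

/-- `M^s_{N,ε}(Z,Φ)`: infimum over countable covers of `Z` by neutralized Bowen balls
of orders `≥ N`. -/
noncomputable def MN (T : X → X) (φ : ℕ → X → ℝ) (Z : Set X) (s ε : ℝ) (N : ℕ) : ℝ≥0∞ :=
  ⨅ (D : Set (X × ℕ)) (_ : D.Countable) (_ : ∀ p ∈ D, N ≤ p.2)
    (_ : Z ⊆ ⋃ p ∈ D, nBall T p.2 ε p.1),
    ∑' p : D, wSup T φ s ε p.1.2 p.1.1

/-- `M^s_ε(Z,Φ) = lim_{N→∞} M^s_{N,ε}(Z,Φ)` (the limit of a nondecreasing sequence). -/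
noncomputable def Mlim (T : X → X) (φ : ℕ → X → ℝ) (Z : Set X) (s ε : ℝ) : ℝ≥0∞ :=
  ⨆ N, MN T φ Z s ε N

/-- The critical value `M_ε(Z,Φ)`. -/
noncomputable def Mcrit (T : X → X) (φ : ℕ → X → ℝ) (Z : Set X) (ε : ℝ) : ℝ :=
  sInf {s | Mlim T φ Z s ε = 0}

/-- The non-additive neutralized Bowen topological pressure
`P^B̃_Z(T,Φ) = lim_{ε→0} M_ε(Z,Φ) = inf_{ε>0} M_ε(Z,Φ)`. -/
noncomputable def PB (T : X → X) (φ : ℕ → X → ℝ) (Z : Set X) : ℝ :=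
  sInf (Mcrit T φ Z '' Ioi 0)

/-- `M̃^s_{N,ε}(Z,Φ)`: as `M^s_{N,ε}` but with the potential evaluated at an arbitrary
chosen point `z_i` of each covering ball. -/
noncomputable def MtN (T : X → X) (φ : ℕ → X → ℝ) (Z : Set X) (s ε : ℝ) (N : ℕ) : ℝ≥0∞ :=
  ⨅ (D : Set ((X × ℕ) × X)) (_ : D.Countable)
    (_ : ∀ p ∈ D, N ≤ p.1.2 ∧ p.2 ∈ nBall T p.1.2 ε p.1.1)
    (_ : Z ⊆ ⋃ p ∈ D, nBall T p.1.2 ε p.1.1),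
    ∑' p : D, ENNReal.ofReal (Real.exp (-(p.1.1.2 : ℝ) * s + φ p.1.1.2 p.1.2))

noncomputable def Mtlim (T : X → X) (φ : ℕ → X → ℝ) (Z : Set X) (s ε : ℝ) : ℝ≥0∞ :=
  ⨆ N, MtN T φ Z s ε N

noncomputable def MtCrit (T : X → X) (φ : ℕ → X → ℝ) (Z : Set X) (ε : ℝ) : ℝ :=
  sInf {s | Mtlim T φ Z s ε = 0}

/-- `𝓜^s_{N,ε}(Z,Φ)`: as `M^s_{N,ε}` but with the potential evaluated at the centers. -/
noncomputable def McN (T : X → X) (φ : ℕ → X → ℝ) (Z : Set X) (s ε : ℝ) (N : ℕ) : ℝ≥0∞ :=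
  ⨅ (D : Set (X × ℕ)) (_ : D.Countable) (_ : ∀ p ∈ D, N ≤ p.2)
    (_ : Z ⊆ ⋃ p ∈ D, nBall T p.2 ε p.1),
    ∑' p : D, ENNReal.ofReal (Real.exp (-(p.1.2 : ℝ) * s + φ p.1.2 p.1.1))

/-- `W^s_{N,ε}(Z,Φ)`: the weighted version, over countable families of neutralized Bowen
balls with positive coefficients `c_i` such that `Σ c_i χ_{B_i} ≥ χ_Z`. -/
noncomputable def WN (T : X → X) (φ : ℕ → X → ℝ) (Z : Set X) (s ε : ℝ) (N : ℕ) : ℝ≥0∞ :=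
  ⨅ (D : Set ((X × ℕ) × ℝ)) (_ : D.Countable)
    (_ : ∀ p ∈ D, N ≤ p.1.2 ∧ 0 < p.2)
    (_ : ∀ x ∈ Z, (1 : ℝ≥0∞) ≤ ∑' p : D,
        (nBall T p.1.1.2 ε p.1.1.1).indicator (fun _ => ENNReal.ofReal p.1.2) x),
    ∑' p : D, ENNReal.ofReal p.1.2 * wSup T φ s ε p.1.1.2 p.1.1.1

noncomputable def Wlim (T : X → X) (φ : ℕ → X → ℝ) (Z : Set X) (s ε : ℝ) : ℝ≥0∞ :=
  ⨆ N, WN T φ Z s ε N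

noncomputable def Wcrit (T : X → X) (φ : ℕ → X → ℝ) (Z : Set X) (ε : ℝ) : ℝ :=
  sInf {s | Wlim T φ Z s ε = 0}

/-- The non-additive neutralized weighted Bowen topological pressure `P^W̃B_Z(T,Φ)`. -/
noncomputable def PWB (T : X → X) (φ : ℕ → X → ℝ) (Z : Set X) : ℝ :=
  sInf (Wcrit T φ Z '' Ioi 0)

/-- The distortion `φ_n(ε) = sup{|φ_n(x) - φ_n(y)| : x ∈ X, y ∈ B_n(x, e^{-nε})}`. -/
noncomputable def distortion (T : X → X) (φ : ℕ → X → ℝ) (n : ℕ) (ε : ℝ) : ℝ :=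
  sSup {r | ∃ x y, y ∈ nBall T n ε x ∧ r = |φ n x - φ n y|}

/-- The tempered distortion condition `lim_{ε→0} limsup_{n→∞} φ_n(ε)/n = 0`. -/
def Tempered (T : X → X) (φ : ℕ → X → ℝ) : Prop :=
  Tendsto (fun ε => limsup (fun n : ℕ => distortion T φ n ε / n) atTop)
    (𝓝[>] (0 : ℝ)) (𝓝 0)

section Measures

variable [MeasurableSpace X]

/-- `Λ^s_{N,ε}(μ,Φ,δ)`: infimum over countable families of neutralized Bowen balls of
orders `≥ N` whose union has `μ`-measure `> 1 - δ`. -/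
noncomputable def ΛN (T : X → X) (φ : ℕ → X → ℝ) (μ : Measure X) (s ε δ : ℝ) (N : ℕ) :
    ℝ≥0∞ :=
  ⨅ (D : Set (X × ℕ)) (_ : D.Countable) (_ : ∀ p ∈ D, N ≤ p.2)
    (_ : ENNReal.ofReal (1 - δ) < μ (⋃ p ∈ D, nBall T p.2 ε p.1)),
    ∑' p : D, wSup T φ s ε p.1.2 p.1.1

noncomputable def Λlim (T : X → X) (φ : ℕ → X → ℝ) (μ : Measure X) (s ε δ : ℝ) : ℝ≥0∞ :=
  ⨆ N, ΛN T φ μ s ε δ N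

/-- The critical value `Λ_ε(μ,Φ,δ)`. -/
noncomputable def Λcrit (T : X → X) (φ : ℕ → X → ℝ) (μ : Measure X) (ε δ : ℝ) : ℝ :=
  sInf {s | Λlim T φ μ s ε δ = 0}

/-- The neutralized Katok pressure `P^K̃_μ(T,Φ,ε) = lim_{δ→0} Λ_ε(μ,Φ,δ)`. -/
noncomputable def PK (T : X → X) (φ : ℕ → X → ℝ) (μ : Measure X) (ε : ℝ) : ℝ :=
  sSup ((fun δ => Λcrit T φ μ ε δ) '' Ioo (0 : ℝ) 1)

/-- The lower neutralized Brin–Katok local pressure at `x`. -/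
noncomputable def PBKx (T : X → X) (φ : ℕ → X → ℝ) (μ : Measure X) (ε : ℝ) (x : X) : ℝ :=
  liminf (fun n : ℕ => (-Real.log ((μ (nBall T n ε x)).toReal) + φ n x) / n) atTop

/-- The lower neutralized Brin–Katok local pressure `P̲^B̃K_μ(T,Φ,ε)`. -/
noncomputable def PBK (T : X → X) (φ : ℕ → X → ℝ) (μ : Measure X) (ε : ℝ) : ℝ :=
  ∫ x, PBKx T φ μ ε x ∂μ

/-- `sup{P̲^B̃K_μ(T,Φ,ε) : μ ∈ M(X), μ(Z) = 1}`. -/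
noncomputable def supBK (T : X → X) (φ : ℕ → X → ℝ) (Z : Set X) (ε : ℝ) : ℝ :=
  sSup {p | ∃ μ : Measure X, IsProbabilityMeasure μ ∧ μ Z = 1 ∧ p = PBK T φ μ ε}

/-- `lim_{ε→0} sup{P̲^B̃K_μ(T,Φ,ε) : μ(Z)=1}`, realized as the infimum over `ε > 0`. -/
noncomputable def limSupBK (T : X → X) (φ : ℕ → X → ℝ) (Z : Set X) : ℝ :=
  sInf (supBK T φ Z '' Ioi 0)

/-- `sup{P^K̃_μ(T,Φ,ε) : μ ∈ M(X), μ(Z) = 1}`. -/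
noncomputable def supK (T : X → X) (φ : ℕ → X → ℝ) (Z : Set X) (ε : ℝ) : ℝ :=
  sSup {p | ∃ μ : Measure X, IsProbabilityMeasure μ ∧ μ Z = 1 ∧ p = PK T φ μ ε}

/-- `lim_{ε→0} sup{P^K̃_μ(T,Φ,ε) : μ(Z)=1}`, realized as the infimum over `ε > 0`. -/
noncomputable def limSupK (T : X → X) (φ : ℕ → X → ℝ) (Z : Set X) : ℝ :=
  sInf (supK T φ Z '' Ioi 0)

end Measures

/-!
The weighted covering quantity extends from `χ_Z` to a functional on all functions,
`𝒲 f = inf {Σ cᵢ w(Bᵢ) : Σ cᵢ χ_{Bᵢ} ≥ f on Z}`, which is positively homogeneous and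
subadditive and is finite on bounded functions because `Z` is compact. By Hahn–Banach the
functional `a • 1 ↦ a 𝒲 1` extends to a linear `L ≤ 𝒲` on `C(X, ℝ)`. It is positive because
`𝒲 f = 0` whenever `f ≤ 0` on `Z`, so Riesz–Markov–Kakutani turns it into a measure `ν` of mass
`𝒲 1`. Testing `L` against Urysohn functions: `ν` does not charge the open set `Zᶜ`, on which
`L f ≤ 𝒲 f = 0`, and `ν B ≤ w B` for every open `B` of the family, since the single ball `B`
with weight `1` covers any `0 ≤ f ≤ 1` vanishing off `B`. Normalizing `ν` gives `μ`.
-/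

theorem exists_linearMap_eq_le_sublinear {E : Type*} [AddCommGroup E] [Module ℝ E]
    (N : E → ℝ) (N_hom : ∀ c : ℝ, 0 < c → ∀ x, N (c • x) = c * N x)
    (N_add : ∀ x y, N (x + y) ≤ N x + N y) (x₀ : E) :
    ∃ g : E →ₗ[ℝ] ℝ, g x₀ = N x₀ ∧ ∀ x, g x ≤ N x := by
  have N_zero : N 0 = 0 := by
    have := N_hom 2 two_pos 0
    rw [smul_zero] at this
    linarith
  have hspan : ∀ c : ℝ, c • x₀ = 0 → c • N x₀ = 0 := by
    intro c hc
    rcases smul_eq_zero.1 hc with rfl | rfl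
    · exact zero_smul _ _
    · rw [N_zero, smul_zero]
  let f := LinearPMap.mkSpanSingleton' (σ := RingHom.id ℝ) x₀ (N x₀) hspan
  have hf : ∀ x : f.domain, f x ≤ N x := by
    rintro ⟨x, hx⟩
    obtain ⟨c, rfl⟩ := Submodule.mem_span_singleton.1 hx
    rw [LinearPMap.mkSpanSingleton'_apply, RingHom.id_apply, smul_eq_mul]
    change c * N x₀ ≤ N (c • x₀)
    rcases lt_trichotomy c 0 with hc | rfl | hc
    · have h_neg : 0 ≤ N x₀ + N (-x₀) := by simpa [N_zero] using N_add x₀ (-x₀)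
      have h_smul : c • x₀ = (-c) • -x₀ := by rw [smul_neg, neg_smul, neg_neg]
      rw [h_smul, N_hom (-c) (neg_pos.2 hc)]
      nlinarith
    · simp [N_zero]
    · rw [N_hom c hc]
  obtain ⟨g, hgf, hgN⟩ := exists_extension_of_le_sublinear f N N_hom N_add hf
  exact ⟨g, (hgf ⟨x₀, Submodule.mem_span_singleton_self x₀⟩).trans
    (LinearPMap.mkSpanSingleton'_apply_self _ _ _ _), hgN⟩

theorem Set.Countable.frequently_notMem_nhdsGT {S : Set ℝ} (hS : S.Countable) (a : ℝ) :
    ∃ᶠ θ in 𝓝[>] a, θ ∉ S := by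
  intro h
  obtain ⟨u, hu, hsub⟩ := mem_nhdsGT_iff_exists_Ioo_subset.1 h
  have : (Ioo a u).Countable := hS.mono fun θ hθ => not_not.1 (hsub hθ)
  exact (not_le.2 (mem_Ioi.1 hu)) (Cardinal.Real.Ioo_countable_iff.1 this)

noncomputable section WeightedCover

variable {α ι : Type*} (B : ι → Set α) (w : ι → ℝ≥0∞) (A : Set ι) (Z : Set α)

def weightSum (D : Set (ι × ℝ)) (x : α) : ℝ≥0∞ :=
  ∑' p : D, (B p.1.1).indicator (fun _ => ENNReal.ofReal p.1.2) x

def weightedCost (D : Set (ι × ℝ)) : ℝ≥0∞ :=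
  ∑' p : D, ENNReal.ofReal p.1.2 * w p.1.1

def IsWeightedCover (f : α → ℝ) (D : Set (ι × ℝ)) : Prop :=
  D.Countable ∧ (∀ p ∈ D, p.1 ∈ A ∧ 0 < p.2) ∧ ∀ x ∈ Z, ENNReal.ofReal (f x) ≤ weightSum B D x

def weightedCover (f : α → ℝ) : ℝ≥0∞ :=
  ⨅ (D : Set (ι × ℝ)) (_ : IsWeightedCover B A Z f D), weightedCost w D

def rescaleWeights (θ : ℝ) (D : Set (ι × ℝ)) : Set (ι × ℝ) := Prod.map id (θ * ·) '' D

variable {B w A Z} {D D₁ D₂ : Set (ι × ℝ)} {f g : α → ℝ} {θ : ℝ}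

theorem tsum_rescaleWeights {M : Type*} [AddCommMonoid M] [TopologicalSpace M] (hθ : θ ≠ 0)
    (F : ι × ℝ → M) :
    ∑' p : rescaleWeights θ D, F p = ∑' p : D, F (p.1.1, θ * p.1.2) :=
  tsum_image F (Function.injective_id.prodMap (mul_right_injective₀ hθ)).injOn

theorem weightSum_rescaleWeights (hθ : 0 < θ) (x : α) :
    weightSum B (rescaleWeights θ D) x = ENNReal.ofReal θ * weightSum B D x := by
  refine (tsum_rescaleWeights hθ.ne'
    fun p => (B p.1).indicator (fun _ => ENNReal.ofReal p.2) x).trans ?_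
  rw [weightSum, ← ENNReal.tsum_mul_left]
  refine tsum_congr fun p => ?_
  by_cases hx : x ∈ B p.1.1 <;> simp [hx, ENNReal.ofReal_mul hθ.le]

theorem weightedCost_rescaleWeights (hθ : 0 < θ) :
    weightedCost w (rescaleWeights θ D) = ENNReal.ofReal θ * weightedCost w D := by
  refine (tsum_rescaleWeights hθ.ne' fun p => ENNReal.ofReal p.2 * w p.1).trans ?_
  rw [weightedCost, ← ENNReal.tsum_mul_left]
  simp only [ENNReal.ofReal_mul hθ.le, mul_assoc]

theorem weightSum_union (h : Disjoint D₁ D₂) (x : α) :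
    weightSum B (D₁ ∪ D₂) x = weightSum B D₁ x + weightSum B D₂ x :=
  ENNReal.summable.tsum_union_disjoint
    (f := fun p : ι × ℝ => (B p.1).indicator (fun _ => ENNReal.ofReal p.2) x) h ENNReal.summable

theorem weightedCost_union (h : Disjoint D₁ D₂) :
    weightedCost w (D₁ ∪ D₂) = weightedCost w D₁ + weightedCost w D₂ :=
  ENNReal.summable.tsum_union_disjoint (f := fun p : ι × ℝ => ENNReal.ofReal p.2 * w p.1) h
    ENNReal.summable

namespace IsWeightedCover

theorem mono (h : IsWeightedCover B A Z g D) (hfg : ∀ x ∈ Z, f x ≤ g x) :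
    IsWeightedCover B A Z f D :=
  ⟨h.1, h.2.1, fun x hx => (ENNReal.ofReal_le_ofReal (hfg x hx)).trans (h.2.2 x hx)⟩

theorem smul (h : IsWeightedCover B A Z f D) (hθ : 0 < θ) :
    IsWeightedCover B A Z (θ • f) (rescaleWeights θ D) := by
  refine ⟨h.1.image _, ?_, fun x hx => ?_⟩
  · rintro _ ⟨p, hp, rfl⟩
    exact ⟨(h.2.1 p hp).1, mul_pos hθ (h.2.1 p hp).2⟩
  · rw [weightSum_rescaleWeights hθ, Pi.smul_apply, smul_eq_mul, ENNReal.ofReal_mul hθ.le]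
    exact mul_le_mul_right (h.2.2 x hx) _

theorem rescaleWeights_of_one_le (h : IsWeightedCover B A Z f D) (hθ : 1 ≤ θ) :
    IsWeightedCover B A Z f (rescaleWeights θ D) := by
  refine ⟨h.1.image _, ?_, fun x hx => ?_⟩
  · rintro _ ⟨p, hp, rfl⟩
    exact ⟨(h.2.1 p hp).1, mul_pos (one_pos.trans_le hθ) (h.2.1 p hp).2⟩
  · rw [weightSum_rescaleWeights (one_pos.trans_le hθ)]
    exact (h.2.2 x hx).trans (le_mul_of_one_le_left' (ENNReal.one_le_ofReal.2 hθ))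

theorem union (h₁ : IsWeightedCover B A Z f D₁) (h₂ : IsWeightedCover B A Z g D₂)
    (hd : Disjoint D₁ D₂) : IsWeightedCover B A Z (f + g) (D₁ ∪ D₂) := by
  refine ⟨h₁.1.union h₂.1, fun p hp => hp.elim (h₁.2.1 p) (h₂.2.1 p), fun x hx => ?_⟩
  rw [weightSum_union hd, Pi.add_apply]
  exact ENNReal.ofReal_add_le.trans (add_le_add (h₁.2.2 x hx) (h₂.2.2 x hx))

end IsWeightedCover

theorem weightedCover_le (h : IsWeightedCover B A Z f D) :
    weightedCover B w A Z f ≤ weightedCost w D :=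
  biInf_le _ h

theorem exists_isWeightedCover_lt {r : ℝ≥0∞} (h : weightedCover B w A Z f < r) :
    ∃ D, IsWeightedCover B A Z f D ∧ weightedCost w D < r := by
  simpa only [weightedCover, iInf_lt_iff, exists_prop] using h

theorem le_weightedCover {r : ℝ≥0∞}
    (h : ∀ D, IsWeightedCover B A Z f D → r ≤ weightedCost w D) : r ≤ weightedCover B w A Z f :=
  le_iInf₂ h

theorem weightedCover_mono (hfg : ∀ x ∈ Z, f x ≤ g x) :
    weightedCover B w A Z f ≤ weightedCover B w A Z g :=
  le_weightedCover fun _ hD => weightedCover_le (hD.mono hfg)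

theorem weightedCover_smul_le (hθ : 0 < θ) :
    weightedCover B w A Z (θ • f) ≤ ENNReal.ofReal θ * weightedCover B w A Z f := by
  simp_rw [weightedCover, ENNReal.mul_iInf_of_ne (ENNReal.ofReal_pos.2 hθ).ne'
    ENNReal.ofReal_ne_top]
  exact le_iInf₂ fun D hD =>
    (weightedCover_le (hD.smul hθ)).trans_eq (weightedCost_rescaleWeights hθ)

theorem weightedCover_smul (hθ : 0 < θ) :
    weightedCover B w A Z (θ • f) = ENNReal.ofReal θ * weightedCover B w A Z f := by
  refine le_antisymm (weightedCover_smul_le hθ) ?_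
  calc ENNReal.ofReal θ * weightedCover B w A Z f
      = ENNReal.ofReal θ * weightedCover B w A Z (θ⁻¹ • θ • f) := by
        rw [inv_smul_smul₀ hθ.ne']
    _ ≤ ENNReal.ofReal θ * (ENNReal.ofReal θ⁻¹ * weightedCover B w A Z (θ • f)) :=
        mul_le_mul_right (weightedCover_smul_le (inv_pos.2 hθ)) _
    _ = weightedCover B w A Z (θ • f) := by
        rw [← mul_assoc, ← ENNReal.ofReal_mul hθ.le, mul_inv_cancel₀ hθ.ne', ENNReal.ofReal_one,
          one_mul]

theorem weightedCover_eq_zero (hf : ∀ x ∈ Z, f x ≤ 0) : weightedCover B w A Z f = 0 := by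
  refine nonpos_iff_eq_zero.1 ((weightedCover_le (D := ∅) ⟨countable_empty, by simp,
    fun x hx => by simp [ENNReal.ofReal_eq_zero.2 (hf x hx)]⟩).trans_eq ?_)
  simp [weightedCost]

theorem weightedCover_le_weight {a : ι} (ha : a ∈ A)
    (hf : ∀ x ∈ Z, f x ≤ (B a).indicator 1 x) : weightedCover B w A Z f ≤ w a := by
  have hcover : IsWeightedCover B A Z f {(a, 1)} := by
    refine ⟨countable_singleton _, by simp [ha], fun x hx => ?_⟩
    have := hf x hx
    by_cases hxa : x ∈ B a <;> simp_all [weightSum]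
  simpa [weightedCost, tsum_singleton] using weightedCover_le (w := w) hcover

theorem countable_setOf_not_disjoint_rescaleWeights (h₁ : D₁.Countable) (h₂ : D₂.Countable)
    (h₂₀ : ∀ p ∈ D₂, p.2 ≠ 0) : {θ | ¬Disjoint D₁ (rescaleWeights θ D₂)}.Countable := by
  refine ((h₂.prod h₁).image fun pq : (ι × ℝ) × (ι × ℝ) => pq.2.2 / pq.1.2).mono ?_
  intro θ hθ
  obtain ⟨_, hq₁, p, hp₂, rfl⟩ := Set.not_disjoint_iff.1 hθ
  exact ⟨(p, _), ⟨hp₂, hq₁⟩, by simp [h₂₀ p hp₂]⟩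

/-- Covers are sets, so two near-optimal covers may share members; rescaling the weights of one
of them by a generic factor `θ` close to `1` makes them disjoint. -/
theorem weightedCover_add_le :
    weightedCover B w A Z (f + g) ≤ weightedCover B w A Z f + weightedCover B w A Z g := by
  refine ENNReal.le_of_forall_pos_le_add fun η hη hfin => ?_
  have hη₂ : (η / 2 : ℝ≥0∞) ≠ 0 := by simpa using hη.ne'
  obtain ⟨D₁, h₁, hD₁⟩ := exists_isWeightedCover_lt (ENNReal.lt_add_right
    (ENNReal.add_ne_top.1 hfin.ne).1 hη₂)
  obtain ⟨D₂, h₂, hD₂⟩ := exists_isWeightedCover_lt (ENNReal.lt_add_right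
    (ENNReal.add_ne_top.1 hfin.ne).2 hη₂)
  have hclose : ∀ᶠ θ in 𝓝[>] 1,
      ENNReal.ofReal θ * weightedCost w D₂ < weightedCover B w A Z g + η / 2 := by
    have h := ENNReal.Tendsto.mul_const (ENNReal.continuous_ofReal.tendsto 1)
      (Or.inr hD₂.ne_top) (b := weightedCost w D₂)
    rw [ENNReal.ofReal_one, one_mul] at h
    exact (h.mono_left nhdsWithin_le_nhds).eventually (gt_mem_nhds hD₂)
  obtain ⟨θ, hθD, hθw, hθ₁⟩ := ((countable_setOf_not_disjoint_rescaleWeights h₁.1 h₂.1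
    fun p hp => (h₂.2.1 p hp).2.ne').frequently_notMem_nhdsGT 1).and_eventually
    (hclose.and self_mem_nhdsWithin) |>.exists
  replace hθD : Disjoint D₁ (rescaleWeights θ D₂) := not_not.1 hθD
  calc weightedCover B w A Z (f + g)
      ≤ weightedCost w (D₁ ∪ rescaleWeights θ D₂) :=
        weightedCover_le (h₁.union (h₂.rescaleWeights_of_one_le hθ₁.le) hθD)
    _ = weightedCost w D₁ + ENNReal.ofReal θ * weightedCost w D₂ := by
        rw [weightedCost_union hθD, weightedCost_rescaleWeights (one_pos.trans hθ₁)]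
    _ ≤ (weightedCover B w A Z f + η / 2) + (weightedCover B w A Z g + η / 2) :=
        add_le_add hD₁.le hθw.le
    _ = weightedCover B w A Z f + weightedCover B w A Z g + η := by
        rw [add_add_add_comm, ENNReal.add_halves]

theorem weightedCover_one_lt_top [TopologicalSpace α] (hZ : IsCompact Z)
    (hB : ∀ a ∈ A, IsOpen (B a)) (hZB : Z ⊆ ⋃ a ∈ A, B a) (hw : ∀ a ∈ A, w a ≠ ∞) :
    weightedCover B w A Z 1 < ∞ := by
  obtain ⟨t, htA, ht, hZt⟩ := hZ.elim_finite_subcover_image hB hZB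
  set D := (fun a => (a, (1 : ℝ))) '' t
  have hcover : IsWeightedCover B A Z 1 D := by
    refine ⟨(ht.image _).countable, ?_, fun x hx => ?_⟩
    · rintro _ ⟨a, ha, rfl⟩
      exact ⟨htA ha, one_pos⟩
    · obtain ⟨a, ha, hxa⟩ := mem_iUnion₂.1 (hZt hx)
      calc ENNReal.ofReal ((1 : α → ℝ) x)
          = (B a).indicator (fun _ => ENNReal.ofReal 1) x := by simp [hxa]
        _ ≤ weightSum B D x := ENNReal.le_tsum (⟨(a, 1), a, ha, rfl⟩ : D)
  have : Fintype D := (ht.image _).fintype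
  refine (weightedCover_le hcover).trans_lt ?_
  rw [weightedCost, tsum_fintype]
  refine ENNReal.sum_lt_top.2 fun ⟨p, a, ha, hp⟩ _ => ?_
  subst hp
  exact ENNReal.mul_lt_top ENNReal.ofReal_lt_top (hw a (htA ha)).lt_top

theorem weightedCover_lt_top (h₁ : weightedCover B w A Z 1 ≠ ∞) (hf : BddAbove (range f)) :
    weightedCover B w A Z f < ∞ := by
  obtain ⟨M, hM⟩ := hf
  have hM₁ : 0 < max M 1 := lt_max_of_lt_right one_pos
  calc weightedCover B w A Z f ≤ weightedCover B w A Z (max M 1 • 1) :=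
        weightedCover_mono fun x _ => by simpa using Or.inl (hM ⟨x, rfl⟩)
    _ = ENNReal.ofReal (max M 1) * weightedCover B w A Z 1 := weightedCover_smul hM₁
    _ < ∞ := ENNReal.mul_lt_top ENNReal.ofReal_lt_top h₁.lt_top

end WeightedCover
open scoped CompactlySupported

theorem RealRMK.rieszMeasure_le_of_isOpen {α : Type*} [TopologicalSpace α] [T2Space α]
    [LocallyCompactSpace α] [MeasurableSpace α] [BorelSpace α] (Λ : C_c(α, ℝ) →ₚ[ℝ] ℝ)
    {U : Set α} (hU : IsOpen U) {b : ℝ≥0∞}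
    (h : ∀ f : C_c(α, ℝ), (∀ x, 0 ≤ f x) → (∀ x, f x ≤ 1) → (∀ x ∉ U, f x = 0) →
      ENNReal.ofReal (Λ f) ≤ b) :
    RealRMK.rieszMeasure Λ U ≤ b := by
  rw [hU.measure_eq_iSup_isCompact]
  refine iSup₂_le fun K hKU => iSup_le fun hK => ?_
  obtain ⟨f, hfK, hfc, hfU, hf01⟩ := exists_continuousMap_one_of_isCompact_subset_isOpen hK hU hKU
  let f' : C_c(α, ℝ) := ⟨f, hfc⟩
  refine (RealRMK.rieszMeasure_le_of_eq_one Λ (f := f') (fun x => (hf01 x).1) hK hfK).trans ?_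
  exact h f' (fun x => (hf01 x).1) (fun x => (hf01 x).2)
    fun x hx => image_eq_zero_of_notMem_tsupport fun h => hx (hfU h)

section Frostman

variable {α ι : Type*} [TopologicalSpace α] [CompactSpace α] [T2Space α] [MeasurableSpace α]
  [BorelSpace α] {B : ι → Set α} {w : ι → ℝ≥0∞} {A : Set ι} {Z : Set α}

theorem exists_measure_weightedCover (hZ : IsCompact Z) (hB : ∀ a ∈ A, IsOpen (B a))
    (hZB : Z ⊆ ⋃ a ∈ A, B a) (hw : ∀ a ∈ A, w a ≠ ∞) :
    ∃ ν : Measure α, ν univ = weightedCover B w A Z 1 ∧ ν Zᶜ = 0 ∧ ∀ a ∈ A, ν (B a) ≤ w a := by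
  have h₁ := (weightedCover_one_lt_top hZ hB hZB hw).ne
  have hfin (f : C_c(α, ℝ)) : weightedCover B w A Z f ≠ ∞ :=
    (weightedCover_lt_top h₁ (isCompact_range f.continuous).bddAbove).ne
  let P (f : C_c(α, ℝ)) : ℝ := (weightedCover B w A Z f).toReal
  let one : C_c(α, ℝ) := ⟨1, .of_compactSpace 1⟩
  obtain ⟨Λ₀, hΛ₀one, hΛ₀P⟩ := exists_linearMap_eq_le_sublinear P
    (fun θ hθ f => by simp [P, weightedCover_smul hθ, ENNReal.toReal_mul, hθ.le])
    (fun f g => (ENNReal.toReal_mono (ENNReal.add_ne_top.2 ⟨hfin f, hfin g⟩)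
      weightedCover_add_le).trans_eq (ENNReal.toReal_add (hfin f) (hfin g))) one
  have hΛ₀_nonpos (f : C_c(α, ℝ)) (hf : ∀ x ∈ Z, f x ≤ 0) : Λ₀ f ≤ 0 :=
    (hΛ₀P f).trans_eq (by simp [P, weightedCover_eq_zero hf])
  let Λ := PositiveLinearMap.mk₀ Λ₀ fun f hf => by
    simpa using hΛ₀_nonpos (-f) fun x _ => by simpa using hf x
  refine ⟨RealRMK.rieszMeasure Λ, ?_, ?_, fun a ha => ?_⟩
  · have hΛone : ENNReal.ofReal (Λ one) = weightedCover B w A Z 1 := by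
      change ENNReal.ofReal (Λ₀ one) = _
      rw [hΛ₀one]
      exact ENNReal.ofReal_toReal h₁
    refine le_antisymm ?_ ?_
    · exact (RealRMK.rieszMeasure_le_of_eq_one Λ (f := one) (fun _ => zero_le_one)
        isCompact_univ fun _ _ => rfl).trans_eq hΛone
    · exact hΛone.symm.trans_le (RealRMK.le_rieszMeasure_tsupport_subset Λ (f := one)
        (fun _ => ⟨zero_le_one, le_rfl⟩) (subset_univ _))
  · refine nonpos_iff_eq_zero.1 (RealRMK.rieszMeasure_le_of_isOpen Λ hZ.isClosed.isOpen_compl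
      fun f _ _ hf => ?_)
    exact (ENNReal.ofReal_eq_zero.2 (hΛ₀_nonpos f fun x hx => (hf x (not_not_intro hx)).le)).le
  · refine RealRMK.rieszMeasure_le_of_isOpen Λ (hB a ha) fun f _ hf₁ hf₀ => ?_
    calc ENNReal.ofReal (Λ f) ≤ ENNReal.ofReal (P f) := ENNReal.ofReal_le_ofReal (hΛ₀P f)
      _ = weightedCover B w A Z f := ENNReal.ofReal_toReal (hfin f)
      _ ≤ w a := weightedCover_le_weight ha fun x _ => by
          by_cases hx : x ∈ B a <;> simp [hx, hf₁, hf₀]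

theorem exists_isProbabilityMeasure_weightedCover (hZ : IsCompact Z)
    (hB : ∀ a ∈ A, IsOpen (B a)) (hZB : Z ⊆ ⋃ a ∈ A, B a) (hw : ∀ a ∈ A, w a ≠ ∞)
    (hpos : 0 < weightedCover B w A Z 1) :
    ∃ μ : Measure α, IsProbabilityMeasure μ ∧ μ Z = 1 ∧
      ∀ a ∈ A, μ (B a) ≤ (weightedCover B w A Z 1)⁻¹ * w a := by
  obtain ⟨ν, hν, hνZ, hνB⟩ := exists_measure_weightedCover hZ hB hZB hw
  have hinv : (weightedCover B w A Z 1)⁻¹ * weightedCover B w A Z 1 = 1 :=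
    ENNReal.inv_mul_cancel hpos.ne' (weightedCover_one_lt_top hZ hB hZB hw).ne
  refine ⟨(weightedCover B w A Z 1)⁻¹ • ν, ⟨?_⟩, ?_, fun a ha => ?_⟩
  · rw [Measure.smul_apply, hν, smul_eq_mul, hinv]
  · rw [Measure.smul_apply, measure_congr (ae_eq_univ.2 hνZ), hν, smul_eq_mul, hinv]
  · rw [Measure.smul_apply, smul_eq_mul]
    exact mul_le_mul_right (hνB a ha) _

end Frostman

theorem isOpen_bowenBall {T : X → X} (hT : Continuous T) (n : ℕ) (x : X) (r : ℝ) :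
    IsOpen (bowenBall T n x r) := by
  have h : bowenBall T n x r = ⋂ j ∈ Iio n, T^[j] ⁻¹' ball (T^[j] x) r := by
    ext y
    simp [bowenBall, dist_comm]
  rw [h]
  exact (finite_Iio n).isOpen_biInter fun j _ => isOpen_ball.preimage (hT.iterate j)

theorem mem_bowenBall_self (T : X → X) (n : ℕ) (x : X) {r : ℝ} (hr : 0 < r) :
    x ∈ bowenBall T n x r :=
  fun j _ => by simpa using hr

theorem WN_eq_weightedCover (T : X → X) (φ : ℕ → X → ℝ) (Z : Set X) (s ε : ℝ) (N : ℕ) :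
    WN T φ Z s ε N = weightedCover (fun q : X × ℕ => nBall T q.2 ε q.1)
      (fun q => wSup T φ s ε q.2 q.1) {q | N ≤ q.2} Z 1 := by
  simp only [WN, weightedCover, IsWeightedCover, weightSum, weightedCost, iInf_and, Pi.one_apply,
    ENNReal.ofReal_one, mem_ofPred_eq]

theorem stmt10_general {X : Type*} [MetricSpace X] [CompactSpace X] [MeasurableSpace X]
    [BorelSpace X] (T : X → X) (hT : Continuous T)
    (φ : ℕ → X → ℝ) (Z : Set X)
    (hZ : IsCompact Z) (s ε : ℝ) (N : ℕ)
    (c : ℝ≥0∞) (hc : c = WN T φ Z s ε N) (hcpos : 0 < c) :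
    ∃ μ : Measure X, IsProbabilityMeasure μ ∧ μ Z = 1 ∧
      ∀ (x : X) (n : ℕ), N ≤ n →
        μ (nBall T n ε x) ≤
          c⁻¹ * ENNReal.ofReal
            (Real.exp (-(n : ℝ) * s + sSup ((φ n) '' nBall T n ε x))) := by
  rw [WN_eq_weightedCover] at hc
  subst hc
  obtain ⟨μ, hμ, hμZ, hμB⟩ := exists_isProbabilityMeasure_weightedCover hZ
    (fun q _ => isOpen_bowenBall hT _ _ _)
    (fun x _ => mem_iUnion₂.2 ⟨(x, N), le_refl N, mem_bowenBall_self T N x (Real.exp_pos _)⟩)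
    (fun _ _ => ENNReal.ofReal_ne_top) hcpos
  exact ⟨μ, hμ, hμZ, fun x n hn => hμB (x, n) hn⟩

/-- Frostman's lemma for the neutralized weighted pressure. -/
theorem stmt10 {X : Type*} [MetricSpace X] [CompactSpace X] [MeasurableSpace X]
    [BorelSpace X] (T : X → X) (hT : Continuous T)
    (φ : ℕ → X → ℝ) (hφ : ∀ n, Continuous (φ n)) (Z : Set X) (hZne : Z.Nonempty)
    (hZ : IsCompact Z) (s ε : ℝ) (hε : 0 < ε) (N : ℕ)
    (c : ℝ≥0∞) (hc : c = WN T φ Z s ε N) (hcpos : 0 < c) :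
    ∃ μ : Measure X, IsProbabilityMeasure μ ∧ μ Z = 1 ∧
      ∀ (x : X) (n : ℕ), N ≤ n →
        μ (nBall T n ε x) ≤
          c⁻¹ * ENNReal.ofReal
            (Real.exp (-(n : ℝ) * s + sSup ((φ n) '' nBall T n ε x))) :=
  stmt10_general T hT φ Z hZ s ε N c hc hcpos
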